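/- Let G = (V, E) be a finite simple graph with bunkbed graph G±, let u ≠ v ∈ V, let r ≥ 2, and let A₁, …, A_r be distinct cuts (each in S⁻ or each in S⁺) with S := supp(A₁, …, A_r) such that u and v lie in different components of G[S]. Let W be the component of G[S] containing v, and let A'ᵢ be obtained from Aᵢ by swapping x₋ ↔ x₊ for all x ∈ W. Then (A'₁, …, A'_r) are distinct cuts in the opposite family (S⁺ or S⁻ respectively), supp(A'₁,…,A'_r) = S, and ∂A'₁ ∪ ⋯ ∪ ∂A'_r has the same probability under any symmetric edge-probability function, i.e., P(E_{A'₁} ∩ ⋯ ∩ E_{A'_r}) = P(E_{A₁} ∩ ⋯ ∩ E_{A_r}). -/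

import Mathlib

open SimpleGraph Finset
open scoped Classical

variable {V : Type*}

/-- The bunkbed graph `G □ K₂`: vertex `(x, false)` is `x₋`, vertex `(x, true)` is `x₊`. -/
def bunkbed (G : SimpleGraph V) : SimpleGraph (V × Bool) where
  Adj a b := (a.2 = b.2 ∧ G.Adj a.1 b.1) ∨ (a.1 = b.1 ∧ a.2 ≠ b.2)
  symm := by
    constructor
    rintro ⟨x, s⟩ ⟨y, t⟩ (⟨h1, h2⟩ | ⟨h1, h2⟩)
    · exact Or.inl ⟨h1.symm, h2.symm⟩
    · exact Or.inr ⟨h1.symm, Ne.symm h2⟩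
  loopless := by
    constructor
    rintro ⟨x, s⟩ (⟨_, h⟩ | ⟨_, h⟩)
    · exact G.irrefl h
    · exact h rfl

/-- `supp A = {x : h_x(A) = 1}`, i.e. exactly one of `x₋, x₊` lies in `A`. -/
def supp (A : Set (V × Bool)) : Set V := {x | Xor' ((x, false) ∈ A) ((x, true) ∈ A)}

/-- Edge boundary of a vertex set in a graph. -/
def bdry {W : Type*} (H : SimpleGraph W) (A : Set W) : Set (Sym2 W) :=
  {e | e ∈ H.edgeSet ∧ ∃ x y, e = s(x, y) ∧ x ∈ A ∧ y ∉ A}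

/-- The induced restriction of `G` to a vertex set `S`, as a graph on `V`. -/
def within (G : SimpleGraph V) (S : Set V) : SimpleGraph V where
  Adj a b := G.Adj a b ∧ a ∈ S ∧ b ∈ S
  symm := ⟨fun _ _ ⟨h, ha, hb⟩ => ⟨h.symm, hb, ha⟩⟩
  loopless := ⟨fun a ⟨h, _⟩ => G.irrefl h⟩

/-- Probability of an event `Q` (a predicate on the set of open edges) under independent
bond percolation on `H` where edge `e` is open with probability `p e`. -/
noncomputable def prEvent {W : Type*} [Fintype W] (H : SimpleGraph W)
    (p : Sym2 W → ℝ) (Q : Finset (Sym2 W) → Prop) : ℝ :=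
  ∑ ω ∈ H.edgeFinset.powerset,
    if Q ω then ∏ e ∈ H.edgeFinset, (if e ∈ ω then p e else 1 - p e) else 0

/-- The two-point function: probability that `a` and `b` are joined by a path of open edges. -/
noncomputable def prConn {W : Type*} [Fintype W] (H : SimpleGraph W)
    (p : Sym2 W → ℝ) (a b : W) : ℝ :=
  prEvent H p fun ω => (SimpleGraph.fromEdgeSet (↑ω : Set (Sym2 W))).Reachable a b

/-! Let `W` be the component of `v` in `G[S]` and `σ` the involution of `G±` swapping the two
levels over `W`, so that `A'ᵢ = σ⁻¹ Aᵢ`. Swapping levels preserves supports, and `σ` fixes `u₋`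
since `u ∉ W`. Also `v₋ ∈ A'ᵢ ↔ v₊ ∈ Aᵢ`: either `v ∈ W`, or `v ∉ S` and `Aᵢ` does not
distinguish `v₋` from `v₊`. For the boundaries, flip both endpoints of every edge meeting `W`:
this involution of the edges of `G±` preserves a symmetric `p`, and it carries `∂A'ᵢ` onto `∂Aᵢ`
because every neighbour of `W` outside `W` lies outside `S`. -/

def flipLevel (p : V × Bool) : V × Bool := (p.1, !p.2)

lemma bunkbed_adj_flipLevel (G : SimpleGraph V) (a b : V × Bool) :
    (bunkbed G).Adj (flipLevel a) (flipLevel b) ↔ (bunkbed G).Adj a b := by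
  simp only [bunkbed, flipLevel, Bool.not_inj_iff, ne_eq]

lemma mem_bdry_iff {W : Type*} (H : SimpleGraph W) (A : Set W) (a b : W) :
    s(a, b) ∈ bdry H A ↔ H.Adj a b ∧ ¬(a ∈ A ↔ b ∈ A) := by
  constructor
  · rintro ⟨he, x, y, hxy, hx, hy⟩
    refine ⟨he, ?_⟩
    rcases Sym2.eq_iff.mp hxy with ⟨rfl, rfl⟩ | ⟨rfl, rfl⟩ <;> tauto
  · rintro ⟨he, h⟩
    by_cases ha : a ∈ A
    · exact ⟨he, a, b, rfl, ha, by tauto⟩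
    · exact ⟨he, b, a, Sym2.eq_swap, by tauto, ha⟩

lemma notMem_supp_iff {A : Set (V × Bool)} {x : V} :
    x ∉ supp A ↔ ((x, false) ∈ A ↔ (x, true) ∈ A) :=
  not_xor _ _

lemma flipLevel_mem_iff_of_notMem_supp {A : Set (V × Bool)} {p : V × Bool}
    (h : p.1 ∉ supp A) : flipLevel p ∈ A ↔ p ∈ A := by
  rw [notMem_supp_iff] at h
  obtain ⟨x, _ | _⟩ := p <;> simp only [flipLevel, Bool.not_false, Bool.not_true] <;> tauto

lemma apply_map_flipLevel_of_symm {M : Type*} {G : SimpleGraph V} {f : Sym2 (V × Bool) → M}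
    (hf : ∀ x y : V, f s((x, false), (y, false)) = f s((x, true), (y, true)))
    {e : Sym2 (V × Bool)} (he : e ∈ (bunkbed G).edgeSet) : f (e.map flipLevel) = f e := by
  induction e using Sym2.ind with
  | _ a b =>
  obtain ⟨x, s⟩ := a
  obtain ⟨y, t⟩ := b
  change (s = t ∧ G.Adj x y) ∨ (x = y ∧ s ≠ t) at he
  rcases he with ⟨rfl, -⟩ | ⟨rfl, hst⟩
  · cases s
    · exact (hf x y).symm
    · exact hf x y
  · cases s <;> cases t <;> first | exact absurd rfl hst | exact congrArg f Sym2.eq_swap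

noncomputable def swapOver (W : Set V) (p : V × Bool) : V × Bool :=
  if p.1 ∈ W then flipLevel p else p

lemma swapOver_involutive (W : Set V) : Function.Involutive (swapOver W) := by
  intro p
  by_cases h : p.1 ∈ W <;> simp [swapOver, h, flipLevel]

lemma mem_preimage_swapOver_of_mem {W : Set V} {A : Set (V × Bool)} {p : V × Bool}
    (h : p.1 ∈ W) : p ∈ swapOver W ⁻¹' A ↔ flipLevel p ∈ A := by
  simp [swapOver, h]

lemma mem_preimage_swapOver_of_notMem {W : Set V} {A : Set (V × Bool)} {p : V × Bool}
    (h : p.1 ∉ W) : p ∈ swapOver W ⁻¹' A ↔ p ∈ A := by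
  simp [swapOver, h]

lemma mem_preimage_swapOver_iff_flipLevel {W : Set V} {A : Set (V × Bool)} {p : V × Bool}
    (h : p.1 ∈ W ∨ p.1 ∉ supp A) : p ∈ swapOver W ⁻¹' A ↔ flipLevel p ∈ A := by
  by_cases hp : p.1 ∈ W
  · exact mem_preimage_swapOver_of_mem hp
  · rw [mem_preimage_swapOver_of_notMem hp, flipLevel_mem_iff_of_notMem_supp (h.resolve_left hp)]

lemma supp_preimage_swapOver (W : Set V) (A : Set (V × Bool)) :
    supp (swapOver W ⁻¹' A) = supp A := by
  ext x
  by_cases h : x ∈ W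
  · simp only [supp, Set.mem_ofPred_eq, Set.mem_preimage, swapOver, h, if_true, flipLevel,
      Bool.not_false, Bool.not_true]
    exact (xor_comm _ _).to_iff
  · simp only [supp, Set.mem_ofPred_eq, Set.mem_preimage, swapOver, h, if_false]

noncomputable def swapEdgeOver (W : Set V) (e : Sym2 (V × Bool)) : Sym2 (V × Bool) :=
  if ∃ q ∈ e, q.1 ∈ W then e.map flipLevel else e

lemma swapEdgeOver_mk (W : Set V) (a b : V × Bool) :
    swapEdgeOver W s(a, b) =
      if a.1 ∈ W ∨ b.1 ∈ W then s(flipLevel a, flipLevel b) else s(a, b) := by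
  simp [swapEdgeOver]

lemma swapEdgeOver_involutive (W : Set V) : Function.Involutive (swapEdgeOver W) := by
  intro e
  induction e using Sym2.ind with
  | _ a b =>
  by_cases h : a.1 ∈ W ∨ b.1 ∈ W <;> simp [swapEdgeOver_mk, h, flipLevel]

lemma apply_swapEdgeOver_of_symm {M : Type*} {G : SimpleGraph V} {W : Set V}
    {f : Sym2 (V × Bool) → M}
    (hf : ∀ x y : V, f s((x, false), (y, false)) = f s((x, true), (y, true)))
    {e : Sym2 (V × Bool)} (he : e ∈ (bunkbed G).edgeSet) : f (swapEdgeOver W e) = f e := by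
  unfold swapEdgeOver
  split_ifs
  exacts [apply_map_flipLevel_of_symm hf he, rfl]

section SwapBoundary

variable {G : SimpleGraph V} {W : Set V} {A : Set (V × Bool)}

lemma mem_preimage_swapOver_iff_of_adj
    (hW : ∀ ⦃x y⦄, G.Adj x y → x ∈ W → y ∉ W → y ∉ supp A)
    {a b : V × Bool} (hab : (bunkbed G).Adj a b) (ha : a.1 ∈ W) :
    b ∈ swapOver W ⁻¹' A ↔ flipLevel b ∈ A := by
  refine mem_preimage_swapOver_iff_flipLevel (or_iff_not_imp_left.mpr fun hb => ?_)
  rcases hab with ⟨-, hG⟩ | ⟨hab, -⟩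
  · exact hW hG ha hb
  · exact absurd (hab ▸ ha) hb

lemma mem_bdry_preimage_swapOver_iff
    (hW : ∀ ⦃x y⦄, G.Adj x y → x ∈ W → y ∉ W → y ∉ supp A) (e : Sym2 (V × Bool)) :
    e ∈ bdry (bunkbed G) (swapOver W ⁻¹' A) ↔ swapEdgeOver W e ∈ bdry (bunkbed G) A := by
  induction e using Sym2.ind with
  | _ a b =>
  by_cases h : a.1 ∈ W ∨ b.1 ∈ W
  · have hflip : (bunkbed G).Adj a b →
        (a ∈ swapOver W ⁻¹' A ↔ flipLevel a ∈ A) ∧ (b ∈ swapOver W ⁻¹' A ↔ flipLevel b ∈ A) := by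
      intro hab
      rcases h with ha | hb
      · exact ⟨mem_preimage_swapOver_of_mem ha, mem_preimage_swapOver_iff_of_adj hW hab ha⟩
      · exact ⟨mem_preimage_swapOver_iff_of_adj hW hab.symm hb, mem_preimage_swapOver_of_mem hb⟩
    rw [swapEdgeOver_mk, if_pos h, mem_bdry_iff, mem_bdry_iff, bunkbed_adj_flipLevel]
    exact and_congr_right fun hab => by rw [(hflip hab).1, (hflip hab).2]
  · obtain ⟨ha, hb⟩ := not_or.mp h
    rw [swapEdgeOver_mk, if_neg h, mem_bdry_iff, mem_bdry_iff,
      mem_preimage_swapOver_of_notMem ha, mem_preimage_swapOver_of_notMem hb]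

lemma prod_bdry_preimage_swapOver {M : Type*} [CommMonoid M] [Fintype V] {ι : Type*} [Fintype ι]
    {A : ι → Set (V × Bool)} (hW : ∀ i ⦃x y⦄, G.Adj x y → x ∈ W → y ∉ W → y ∉ supp (A i))
    {f : Sym2 (V × Bool) → M}
    (hf : ∀ x y : V, f s((x, false), (y, false)) = f s((x, true), (y, true))) :
    ∏ e ∈ (⋃ i, bdry (bunkbed G) (swapOver W ⁻¹' A i)).toFinset, f e =
      ∏ e ∈ (⋃ i, bdry (bunkbed G) (A i)).toFinset, f e := by
  have hmem : ∀ e, e ∈ (⋃ i, bdry (bunkbed G) (swapOver W ⁻¹' A i)) ↔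
      swapEdgeOver W e ∈ ⋃ i, bdry (bunkbed G) (A i) := fun e => by
    simp only [Set.mem_iUnion, mem_bdry_preimage_swapOver_iff (hW _)]
  refine Finset.prod_equiv (swapEdgeOver_involutive W).toPerm (by simpa using hmem) ?_
  intro e he
  obtain ⟨i, hi⟩ := Set.mem_iUnion.mp (Set.mem_toFinset.mp he)
  exact (apply_swapEdgeOver_of_symm hf hi.1).symm

end SwapBoundary

lemma notMem_of_adj_of_mem_component {G : SimpleGraph V} {S : Set V} {v x y : V}
    (hxy : G.Adj x y) (hx : x ∈ S ∧ (within G S).Reachable v x)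
    (hy : ¬(y ∈ S ∧ (within G S).Reachable v y)) : y ∉ S :=
  fun hyS => hy ⟨hyS, hx.2.trans (show (within G S).Adj x y from ⟨hxy, hx.1, hyS⟩).reachable⟩

theorem swap_component_cancellation_general [Fintype V] (G : SimpleGraph V) (u v : V)
    (r : ℕ) (A : Fin r → Set (V × Bool)) (hdist : Function.Injective A)
    (hdisc : ¬ (within G (⋃ i, supp (A i))).Reachable u v) :
    Function.Injective (fun i => {p : V × Bool |
        if p.1 ∈ ⋃ i, supp (A i) ∧ (within G (⋃ i, supp (A i))).Reachable v p.1 then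
          (p.1, !p.2) ∈ A i else p ∈ A i}) ∧
    ((∀ i, (u, false) ∈ A i ∧ (v, false) ∉ A i) → ∀ i,
      (u, false) ∈ {p : V × Bool |
        if p.1 ∈ ⋃ i, supp (A i) ∧ (within G (⋃ i, supp (A i))).Reachable v p.1 then
          (p.1, !p.2) ∈ A i else p ∈ A i} ∧
      (v, true) ∉ {p : V × Bool |
        if p.1 ∈ ⋃ i, supp (A i) ∧ (within G (⋃ i, supp (A i))).Reachable v p.1 then
          (p.1, !p.2) ∈ A i else p ∈ A i}) ∧
    ((∀ i, (u, false) ∈ A i ∧ (v, true) ∉ A i) → ∀ i,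
      (u, false) ∈ {p : V × Bool |
        if p.1 ∈ ⋃ i, supp (A i) ∧ (within G (⋃ i, supp (A i))).Reachable v p.1 then
          (p.1, !p.2) ∈ A i else p ∈ A i} ∧
      (v, false) ∉ {p : V × Bool |
        if p.1 ∈ ⋃ i, supp (A i) ∧ (within G (⋃ i, supp (A i))).Reachable v p.1 then
          (p.1, !p.2) ∈ A i else p ∈ A i}) ∧
    (⋃ i, supp {p : V × Bool |
        if p.1 ∈ ⋃ i, supp (A i) ∧ (within G (⋃ i, supp (A i))).Reachable v p.1 then
          (p.1, !p.2) ∈ A i else p ∈ A i}) = (⋃ i, supp (A i)) ∧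
    ∀ p : Sym2 (V × Bool) → ℝ, (∀ e, 0 ≤ p e ∧ p e ≤ 1) →
      (∀ x y : V, p s((x, false), (y, false)) = p s((x, true), (y, true))) →
      ∏ e ∈ (⋃ i, bdry (bunkbed G) {pt : V × Bool |
          if pt.1 ∈ ⋃ i, supp (A i) ∧ (within G (⋃ i, supp (A i))).Reachable v pt.1 then
            (pt.1, !pt.2) ∈ A i else pt ∈ A i}).toFinset, (1 - p e) =
        ∏ e ∈ (⋃ i, bdry (bunkbed G) (A i)).toFinset, (1 - p e) := by
  set S := ⋃ i, supp (A i)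
  set W : Set V := {x | x ∈ S ∧ (within G S).Reachable v x}
  have hswap : ∀ B : Set (V × Bool), {p : V × Bool |
      if p.1 ∈ S ∧ (within G S).Reachable v p.1 then (p.1, !p.2) ∈ B else p ∈ B} =
        swapOver W ⁻¹' B := fun B => by
    ext p
    rw [Set.mem_ofPred_eq]
    split_ifs with hp
    exacts [(mem_preimage_swapOver_of_mem hp).symm, (mem_preimage_swapOver_of_notMem hp).symm]
  simp only [hswap]
  have hsuppS (i : Fin r) : supp (A i) ⊆ S := Set.subset_iUnion (fun i => supp (A i)) i
  have hW (i : Fin r) : ∀ ⦃x y⦄, G.Adj x y → x ∈ W → y ∉ W → y ∉ supp (A i) :=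
    fun _ _ hxy hx hy hyA => notMem_of_adj_of_mem_component hxy hx hy (hsuppS i hyA)
  have hu (i : Fin r) : (u, false) ∈ swapOver W ⁻¹' A i ↔ (u, false) ∈ A i :=
    mem_preimage_swapOver_of_notMem fun hu => hdisc hu.2.symm
  have hv (i : Fin r) (t : Bool) : (v, t) ∈ swapOver W ⁻¹' A i ↔ (v, !t) ∈ A i :=
    mem_preimage_swapOver_iff_flipLevel <| by
      by_cases hvS : v ∈ S
      exacts [Or.inl ⟨hvS, .refl v⟩, Or.inr fun hv => hvS (hsuppS i hv)]
  refine ⟨(swapOver_involutive W).surjective.preimage_injective.comp hdist,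
    fun h i => ⟨(hu i).mpr (h i).1, (hv i true).not.mpr (h i).2⟩,
    fun h i => ⟨(hu i).mpr (h i).1, (hv i false).not.mpr (h i).2⟩,
    by simp only [supp_preimage_swapOver, S], fun p _ hsym => ?_⟩
  exact prod_bdry_preimage_swapOver (f := fun e => 1 - p e) hW fun x y => by rw [hsym]

/-- For `r ≥ 2` distinct cuts all in `S⁻` (or all in `S⁺`) whose joint
support `S` has `u, v` in different components, swapping levels over the component `W` of
`v` yields distinct cuts in the opposite family with the same joint support, whose joint
boundary has the same closure probability under any symmetric edge-probability
function. -/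
theorem swap_component_cancellation [Fintype V] (G : SimpleGraph V) (u v : V) (huv : u ≠ v)
    (r : ℕ) (hr : 2 ≤ r) (A : Fin r → Set (V × Bool)) (hdist : Function.Injective A)
    (hfam : (∀ i, (u, false) ∈ A i ∧ (v, false) ∉ A i) ∨
      (∀ i, (u, false) ∈ A i ∧ (v, true) ∉ A i))
    (hdisc : ¬ (within G (⋃ i, supp (A i))).Reachable u v) :
    Function.Injective (fun i => {p : V × Bool |
        if p.1 ∈ ⋃ i, supp (A i) ∧ (within G (⋃ i, supp (A i))).Reachable v p.1 then
          (p.1, !p.2) ∈ A i else p ∈ A i}) ∧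
    ((∀ i, (u, false) ∈ A i ∧ (v, false) ∉ A i) → ∀ i,
      (u, false) ∈ {p : V × Bool |
        if p.1 ∈ ⋃ i, supp (A i) ∧ (within G (⋃ i, supp (A i))).Reachable v p.1 then
          (p.1, !p.2) ∈ A i else p ∈ A i} ∧
      (v, true) ∉ {p : V × Bool |
        if p.1 ∈ ⋃ i, supp (A i) ∧ (within G (⋃ i, supp (A i))).Reachable v p.1 then
          (p.1, !p.2) ∈ A i else p ∈ A i}) ∧
    ((∀ i, (u, false) ∈ A i ∧ (v, true) ∉ A i) → ∀ i,
      (u, false) ∈ {p : V × Bool |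
        if p.1 ∈ ⋃ i, supp (A i) ∧ (within G (⋃ i, supp (A i))).Reachable v p.1 then
          (p.1, !p.2) ∈ A i else p ∈ A i} ∧
      (v, false) ∉ {p : V × Bool |
        if p.1 ∈ ⋃ i, supp (A i) ∧ (within G (⋃ i, supp (A i))).Reachable v p.1 then
          (p.1, !p.2) ∈ A i else p ∈ A i}) ∧
    (⋃ i, supp {p : V × Bool |
        if p.1 ∈ ⋃ i, supp (A i) ∧ (within G (⋃ i, supp (A i))).Reachable v p.1 then
          (p.1, !p.2) ∈ A i else p ∈ A i}) = (⋃ i, supp (A i)) ∧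
    ∀ p : Sym2 (V × Bool) → ℝ, (∀ e, 0 ≤ p e ∧ p e ≤ 1) →
      (∀ x y : V, p s((x, false), (y, false)) = p s((x, true), (y, true))) →
      ∏ e ∈ (⋃ i, bdry (bunkbed G) {pt : V × Bool |
          if pt.1 ∈ ⋃ i, supp (A i) ∧ (within G (⋃ i, supp (A i))).Reachable v pt.1 then
            (pt.1, !pt.2) ∈ A i else pt ∈ A i}).toFinset, (1 - p e) =
        ∏ e ∈ (⋃ i, bdry (bunkbed G) (A i)).toFinset, (1 - p e) :=
  swap_component_cancellation_general G u v r A hdist hdisc
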